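/- arXiv:1704.07290 — 7 statements merged into one kernel-verified Lean document; each statement's English description precedes it below -/
import Mathlib

section
/- Let Q(x) = a + Σ_j b_j x_j + Σ_{j<k} c_{jk} x_j x_k be a QUBO on n ≥ 2 variables such that Q(x) = 0 for every bitstring of Hamming weight 1, and suppose g ∈ ℝ satisfies g ≤ Q(x) for all bitstrings of weight 0 and all bitstrings of weight 2. If all c_{jk} ≤ C, then 2g ≤ C. -/
theorem qubo_weight_one_quadratic_bound (n : ℕ) (hn : 2 ≤ n)
    (a : ℝ) (b : Fin n → ℝ) (c : Fin n → Fin n → ℝ) (C g : ℝ)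
    (Q : (Fin n → ℝ) → ℝ)
    (hQ : ∀ x, Q x = a + (∑ j, b j * x j) +
      ∑ j, ∑ k, if j < k then c j k * x j * x k else 0)
    (hzero : ∀ x : Fin n → ℝ, (∀ j, x j = 0 ∨ x j = 1) → (∑ j, x j) = 1 → Q x = 0)
    (hg : ∀ x : Fin n → ℝ, (∀ j, x j = 0 ∨ x j = 1) →
      ((∑ j, x j) = 0 ∨ (∑ j, x j) = 2) → g ≤ Q x)
    (hc : ∀ j k, j < k → c j k ≤ C) :
    2 * g ≤ C := by
  set i0 : Fin n := ⟨0, by omega⟩ with hi0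
  set i1 : Fin n := ⟨1, by omega⟩ with hi1
  have hne : i0 ≠ i1 := by simp [hi0, hi1, Fin.ext_iff]
  have hlt : i0 < i1 := by simp [hi0, hi1, Fin.lt_def]
  -- weight 0
  have h0 : g ≤ a := by
    have := hg (fun _ => 0) (fun j => Or.inl rfl) (Or.inl (by simp))
    simpa [hQ] using this
  -- weight 1: for each p, a + b p = 0
  have h1 : ∀ p : Fin n, a + b p = 0 := by
    intro p
    have hbits : ∀ j, (if j = p then (1:ℝ) else 0) = 0 ∨ (if j = p then (1:ℝ) else 0) = 1 := by
      intro j; by_cases h : j = p <;> simp [h]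
    have hsum : (∑ j, if j = p then (1:ℝ) else 0) = 1 := by simp
    have hz := hzero (fun j => if j = p then 1 else 0) hbits hsum
    rw [hQ] at hz
    have hlin : (∑ j, b j * if j = p then (1:ℝ) else 0) = b p := by
      simp [mul_ite]
    have hquad : (∑ j, ∑ k, if j < k then c j k * (if j = p then (1:ℝ) else 0)
        * (if k = p then (1:ℝ) else 0) else 0) = 0 := by
      apply Finset.sum_eq_zero
      intro j _
      apply Finset.sum_eq_zero
      intro k _
      by_cases h : j < k
      · by_cases hj : j = p
        · by_cases hk : k = p
          · exact absurd (hj.trans hk.symm) (ne_of_lt h)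
          · simp [h, hk]
        · simp [h, hj]
      · simp [h]
    rw [hlin, hquad] at hz
    linarith
  -- weight 2 at {i0, i1}
  set x2 : Fin n → ℝ := fun i => if i = i0 ∨ i = i1 then 1 else 0 with hx2
  have hbits2 : ∀ j, x2 j = 0 ∨ x2 j = 1 := by
    intro j; by_cases h : j = i0 ∨ j = i1 <;> simp [hx2, h]
  have hx2i0 : x2 i0 = 1 := by simp [hx2]
  have hx2i1 : x2 i1 = 1 := by simp [hx2]
  have hx2other : ∀ j, j ≠ i0 → j ≠ i1 → x2 j = 0 := by
    intro j h h'; simp [hx2, h, h']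
  have hsum2 : (∑ j, x2 j) = 2 := by
    rw [Finset.sum_eq_add_of_mem i0 i1 (Finset.mem_univ _) (Finset.mem_univ _) hne
      (fun k _ hk => hx2other k hk.1 hk.2)]
    rw [hx2i0, hx2i1]; norm_num
  have hg2 := hg x2 hbits2 (Or.inr hsum2)
  rw [hQ] at hg2
  have hlin2 : (∑ j, b j * x2 j) = b i0 + b i1 := by
    rw [Finset.sum_eq_add_of_mem i0 i1 (Finset.mem_univ _) (Finset.mem_univ _) hne
      (fun k _ hk => by rw [hx2other k hk.1 hk.2, mul_zero])]
    rw [hx2i0, hx2i1]; ring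
  have hquad2 : (∑ j, ∑ k, if j < k then c j k * x2 j * x2 k else 0) = c i0 i1 := by
    have hinner0 : ∀ j, x2 j = 0 → (∑ k, if j < k then c j k * x2 j * x2 k else 0) = 0 := by
      intro j hj
      apply Finset.sum_eq_zero
      intro k _
      by_cases h : j < k <;> simp [h, hj]
    rw [Finset.sum_eq_add_of_mem i0 i1 (Finset.mem_univ _) (Finset.mem_univ _) hne
      (fun j _ hj => hinner0 j (hx2other j hj.1 hj.2))]
    have hA : (∑ k, if i0 < k then c i0 k * x2 i0 * x2 k else 0) = c i0 i1 := by
      rw [Finset.sum_eq_single i1]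
      · simp [hlt, hx2i0, hx2i1]
      · intro k _ hk
        by_cases h : i0 < k
        · have : k ≠ i0 := (ne_of_gt h)
          rw [hx2other k this hk]; simp [h]
        · simp [h]
      · simp
    have hB : (∑ k, if i1 < k then c i1 k * x2 i1 * x2 k else 0) = 0 := by
      apply Finset.sum_eq_zero
      intro k _
      by_cases h : i1 < k
      · have hk0 : k ≠ i0 := ne_of_gt (lt_trans hlt h)
        have hk1 : k ≠ i1 := ne_of_gt h
        rw [hx2other k hk0 hk1]; simp [h]
      · simp [h]
    rw [hA, hB, add_zero]
  rw [hlin2, hquad2] at hg2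
  have hb0 := h1 i0
  have hb1 := h1 i1
  have hC := hc i0 i1 hlt
  linarith
end

section
/- Let Q be a QUBO on n variables with Q(x) = 0 for all bitstrings of Hamming weight r, where 1 ≤ r and r + 1 ≤ n, and suppose g ≤ Q(x) for all bitstrings of weight r-1 and r+1. Then for any subset S of indices with |S| = r-1 and any index u ∉ S, we have g ≤ -b_u - Σ_{j∈S} c_{ju}. -/
theorem qubo_weight_r_lower_bound (n r : ℕ) (hr : 1 ≤ r) (hn : r + 1 ≤ n)
    (a : ℝ) (b : Fin n → ℝ) (c : Fin n → Fin n → ℝ) (g : ℝ)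
    (hsym : ∀ j k, c j k = c k j) (hdiag : ∀ j, c j j = 0)
    (Q : (Fin n → ℝ) → ℝ)
    (hQ : ∀ x, Q x = a + (∑ j, b j * x j) +
      ∑ j, ∑ k, if j < k then c j k * x j * x k else 0)
    (hzero : ∀ T : Finset (Fin n), T.card = r →
      Q (fun j => if j ∈ T then 1 else 0) = 0)
    (hg : ∀ T : Finset (Fin n), T.card = r - 1 ∨ T.card = r + 1 →
      g ≤ Q (fun j => if j ∈ T then 1 else 0))
    (S : Finset (Fin n)) (hS : S.card = r - 1) (u : Fin n) (hu : u ∉ S) :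
    g ≤ -(b u) - ∑ j ∈ S, c j u := by
  -- closed form for Q on indicators
  have hform : ∀ T : Finset (Fin n),
      Q (fun j => if j ∈ T then 1 else 0)
        = a + (∑ j ∈ T, b j) + ∑ j ∈ T, ∑ k ∈ T, (if j < k then c j k else 0) := by
    intro T
    rw [hQ]
    congr 1
    · congr 1
      rw [← Finset.sum_filter_add_sum_filter_not Finset.univ (· ∈ T)]
      have h1 : ∀ j ∈ Finset.univ.filter (· ∈ T),
          b j * (if j ∈ T then (1:ℝ) else 0) = b j := by
        intro j hj; simp at hj; simp [hj]
      have h2 : ∀ j ∈ Finset.univ.filter (¬ · ∈ T),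
          b j * (if j ∈ T then (1:ℝ) else 0) = 0 := by
        intro j hj; simp at hj; simp [hj]
      rw [Finset.sum_congr rfl h1, Finset.sum_congr rfl h2, Finset.sum_const_zero,
        add_zero]
      simp [Finset.filter_mem_eq_inter]
    · have key : ∀ j k : Fin n,
          (if j < k then c j k * (if j ∈ T then (1:ℝ) else 0) * (if k ∈ T then 1 else 0) else 0)
          = if j ∈ T then (if k ∈ T then (if j < k then c j k else 0) else 0) else 0 := by
        intro j k; split_ifs <;> ring
      simp only [key]
      have pull : ∀ j : Fin n, (∑ k : Fin n, if j ∈ T then (if k ∈ T then (if j < k then c j k else 0) else 0) else 0)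
          = if j ∈ T then (∑ k : Fin n, if k ∈ T then (if j < k then c j k else 0) else 0) else 0 := by
        intro j; split_ifs <;> simp
      simp only [pull]
      rw [Finset.sum_ite_mem, Finset.univ_inter]
      refine Finset.sum_congr rfl fun j _ => ?_
      rw [Finset.sum_ite_mem, Finset.univ_inter]
  set f : Fin n → Fin n → ℝ := fun j k => if j < k then c j k else 0 with hf
  have hTcard : (insert u S).card = r := by
    rw [Finset.card_insert_of_notMem hu, hS]
    omega
  have hz := hzero (insert u S) hTcard
  rw [hform] at hz
  have hgS := hg S (Or.inl hS)
  rw [hform] at hgS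
  -- expand sums over insert u S
  have hb : ∑ j ∈ insert u S, b j = b u + ∑ j ∈ S, b j := Finset.sum_insert hu
  have hqu : ∑ j ∈ insert u S, ∑ k ∈ insert u S, f j k
      = (∑ j ∈ S, c j u) + ∑ j ∈ S, ∑ k ∈ S, f j k := by
    rw [Finset.sum_insert hu]
    have h1 : ∑ k ∈ insert u S, f u k = ∑ k ∈ S, f u k := by
      rw [Finset.sum_insert hu]
      simp [hf]
    have h2 : ∀ j ∈ S, ∑ k ∈ insert u S, f j k = f j u + ∑ k ∈ S, f j k :=
      fun j _ => Finset.sum_insert hu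
    rw [h1, Finset.sum_congr rfl h2, Finset.sum_add_distrib]
    have h3 : ∑ k ∈ S, f u k + ∑ j ∈ S, f j u = ∑ j ∈ S, c j u := by
      rw [← Finset.sum_add_distrib]
      refine Finset.sum_congr rfl fun j hj => ?_
      have hne : u ≠ j := fun h => hu (h ▸ hj)
      rcases lt_or_gt_of_ne hne with h | h
      · simp [hf, h, not_lt.mpr h.le, hsym u j]
      · simp [hf, h, not_lt.mpr h.le]
    linarith
  rw [hb, hqu] at hz
  linarith
end

section
/- Let Q be a QUBO on n variables vanishing on all bitstrings of Hamming weight r (with 1 ≤ r, r+1 ≤ n), and suppose g ≤ Q(x) for all bitstrings of weight r-1 and r+1. If all quadratic coefficients satisfy c_{jk} ≤ C, then 2g ≤ C. -/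
theorem qubo_weight_r_gap_quadratic (n r : ℕ) (hr : 1 ≤ r) (hn : r + 1 ≤ n)
    (a : ℝ) (b : Fin n → ℝ) (c : Fin n → Fin n → ℝ) (C g : ℝ)
    (hsym : ∀ j k, c j k = c k j) (hdiag : ∀ j, c j j = 0)
    (Q : (Fin n → ℝ) → ℝ)
    (hQ : ∀ x, Q x = a + (∑ j, b j * x j) +
      ∑ j, ∑ k, if j < k then c j k * x j * x k else 0)
    (hzero : ∀ x : Fin n → ℝ, (∀ j, x j = 0 ∨ x j = 1) →
      (∑ j, x j) = (r : ℝ) → Q x = 0)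
    (hg : ∀ x : Fin n → ℝ, (∀ j, x j = 0 ∨ x j = 1) →
      ((∑ j, x j) = ((r : ℝ) - 1) ∨ (∑ j, x j) = ((r : ℝ) + 1)) → g ≤ Q x)
    (hc : ∀ j k, j < k → c j k ≤ C) :
    2 * g ≤ C := by
  have hn2 : 2 ≤ n := by omega
  set u : Fin n := ⟨0, by omega⟩ with hu
  set v : Fin n := ⟨1, by omega⟩ with hv
  have huv : u ≠ v := by simp [hu, hv, Fin.ext_iff]
  have huvlt : u < v := by simp [hu, hv, Fin.lt_def]
  set s : Fin n → ℝ := fun i => if 2 ≤ i.val ∧ i.val ≤ r then 1 else 0 with hs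
  set e : Fin n → ℝ := fun i => if i = u then 1 else 0 with he
  set f : Fin n → ℝ := fun i => if i = v then 1 else 0 with hf
  have hsu : s u = 0 := by simp [hs, hu]
  have hsv : s v = 0 := by simp [hs, hv]
  have heu : e u = 1 := by simp [he]
  have hev : e v = 0 := by simp [he, huv.symm]
  have hfu : f u = 0 := by simp [hf, huv]
  have hfv : f v = 1 := by simp [hf]
  have hs01 : ∀ j, s j = 0 ∨ s j = 1 := by
    intro j; by_cases h : 2 ≤ j.val ∧ j.val ≤ r <;> simp [hs, h]
  have he0 : ∀ j, j ≠ u → e j = 0 := by intro j h; simp [he, h]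
  have hf0 : ∀ j, j ≠ v → f j = 0 := by intro j h; simp [hf, h]
  -- sum computations
  have hsum_s : (∑ j, s j) = (r : ℝ) - 1 := by
    rw [hs]
    rw [Fin.sum_univ_eq_sum_range (fun m => if 2 ≤ m ∧ m ≤ r then (1:ℝ) else 0) n]
    rw [Finset.sum_boole]
    have : (Finset.range n).filter (fun m => 2 ≤ m ∧ m ≤ r) = Finset.Icc 2 r := by
      ext m; simp [Finset.mem_range, Finset.mem_Icc]; omega
    rw [this, Nat.card_Icc]
    have h2 : r + 1 - 2 = r - 1 := by omega
    rw [h2, Nat.cast_sub hr, Nat.cast_one]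
  have hsum_e : (∑ j, e j) = 1 := by
    rw [he]; simp [Finset.sum_ite_eq']
  have hsum_f : (∑ j, f j) = 1 := by
    rw [hf]; simp [Finset.sum_ite_eq']
  -- the four bitstrings
  have h00 : ∀ j, s j = 0 ∨ s j = 1 := hs01
  have h10 : ∀ j, s j + e j = 0 ∨ s j + e j = 1 := by
    intro j
    by_cases h : j = u
    · subst h; rw [hsu, heu]; right; ring
    · rw [he0 j h, add_zero]; exact hs01 j
  have h01 : ∀ j, s j + f j = 0 ∨ s j + f j = 1 := by
    intro j
    by_cases h : j = v
    · subst h; rw [hsv, hfv]; right; ring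
    · rw [hf0 j h, add_zero]; exact hs01 j
  have h11 : ∀ j, s j + e j + f j = 0 ∨ s j + e j + f j = 1 := by
    intro j
    by_cases h : j = u
    · subst h; rw [hsu, heu, hfu]; right; ring
    · by_cases h' : j = v
      · subst h'; rw [hsv, hev, hfv]; right; ring
      · rw [he0 j h, hf0 j h', add_zero, add_zero]; exact hs01 j
  have hS10 : (∑ j, (s j + e j)) = (r : ℝ) := by
    rw [Finset.sum_add_distrib, hsum_s, hsum_e]; ring
  have hS01 : (∑ j, (s j + f j)) = (r : ℝ) := by
    rw [Finset.sum_add_distrib, hsum_s, hsum_f]; ring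
  have hS11 : (∑ j, (s j + e j + f j)) = (r : ℝ) + 1 := by
    rw [Finset.sum_add_distrib, Finset.sum_add_distrib, hsum_s, hsum_e, hsum_f]; ring
  have hQ10 : Q (fun j => s j + e j) = 0 := hzero _ h10 hS10
  have hQ01 : Q (fun j => s j + f j) = 0 := hzero _ h01 hS01
  have hQ00 : g ≤ Q s := hg s h00 (Or.inl hsum_s)
  have hQ11 : g ≤ Q (fun j => s j + e j + f j) := hg _ h11 (Or.inr hS11)
  -- key identity
  have key : Q (fun j => s j + e j + f j) + Q s
      - Q (fun j => s j + e j) - Q (fun j => s j + f j) = c u v := by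
    rw [hQ, hQ, hQ, hQ]
    have hL : (∑ j, b j * (s j + e j + f j)) + (∑ j, b j * s j)
        - (∑ j, b j * (s j + e j)) - (∑ j, b j * (s j + f j)) = 0 := by
      rw [← Finset.sum_add_distrib, ← Finset.sum_sub_distrib, ← Finset.sum_sub_distrib]
      apply Finset.sum_eq_zero
      intro j _
      ring
    have hB : (∑ j, ∑ k, if j < k then c j k * (s j + e j + f j) * (s k + e k + f k) else 0)
        + (∑ j, ∑ k, if j < k then c j k * s j * s k else 0)
        - (∑ j, ∑ k, if j < k then c j k * (s j + e j) * (s k + e k) else 0)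
        - (∑ j, ∑ k, if j < k then c j k * (s j + f j) * (s k + f k) else 0) = c u v := by
      rw [← Finset.sum_add_distrib, ← Finset.sum_sub_distrib, ← Finset.sum_sub_distrib]
      have step : ∀ j ∈ Finset.univ, ((∑ k, if j < k then c j k * (s j + e j + f j) * (s k + e k + f k) else 0)
          + (∑ k, if j < k then c j k * s j * s k else 0)
          - (∑ k, if j < k then c j k * (s j + e j) * (s k + e k) else 0)
          - (∑ k, if j < k then c j k * (s j + f j) * (s k + f k) else 0))
          = ∑ k, if j = u ∧ k = v then c u v else 0 := by
        intro j _
        rw [← Finset.sum_add_distrib, ← Finset.sum_sub_distrib, ← Finset.sum_sub_distrib]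
        apply Finset.sum_congr rfl
        intro k _
        by_cases hjk : j < k
        · simp only [hjk, if_true]
          have expand : c j k * (s j + e j + f j) * (s k + e k + f k)
              + c j k * s j * s k - c j k * (s j + e j) * (s k + e k)
              - c j k * (s j + f j) * (s k + f k)
              = c j k * (e j * f k + f j * e k) := by ring
          rw [expand]
          by_cases hju : j = u
          · by_cases hkv : k = v
            · subst hju; subst hkv
              simp [heu, hfv, hev, hfu]
            · have : f k = 0 := hf0 k hkv
              have h2 : f j = 0 := by
                rw [hju]; exact hfu
              simp [this, h2, hkv]
          · have h1 : e j = 0 := he0 j hju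
            have h2 : e k = 0 ∨ f j = 0 := by
              by_cases hjv : j = v
              · left
                apply he0
                intro hku
                rw [hjv, hku] at hjk
                exact absurd hjk (not_lt.mpr (le_of_lt huvlt))
              · right; exact hf0 j hjv
            rcases h2 with h2 | h2 <;> simp [h1, h2, hju]
        · simp only [hjk, if_false]
          have : ¬(j = u ∧ k = v) := by
            rintro ⟨rfl, rfl⟩
            exact hjk huvlt
          rw [if_neg this]
          norm_num
      rw [Finset.sum_congr rfl step]
      have inner : ∀ j ∈ Finset.univ, (∑ k, if j = u ∧ k = v then c u v else 0)
          = if j = u then c u v else 0 := by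
        intro j _
        by_cases hju : j = u
        · simp [hju, Finset.sum_ite_eq', Finset.sum_ite_eq]
        · simp [hju]
      rw [Finset.sum_congr rfl inner]
      simp [Finset.sum_ite_eq', Finset.sum_ite_eq]
    linarith
  have hcle : c u v ≤ C := hc u v huvlt
  linarith
end

section
/- Let Q be a QUBO on n variables vanishing on all bitstrings of Hamming weight r (1 ≤ r, r+1 ≤ n), and suppose g ≤ Q(x) for all bitstrings of weight r-1 and r+1. If all linear coefficients satisfy b_j ≥ -B, then (2r-1)·g ≤ B. -/
private lemma qubo_half_sum {n : ℕ} (c : Fin n → Fin n → ℝ)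
    (hsym : ∀ j k, c j k = c k j) (hdiag : ∀ j, c j j = 0) (S : Finset (Fin n)) :
    ∑ j ∈ S, ∑ k ∈ S, (if j < k then c j k else 0)
      = (∑ j ∈ S, ∑ k ∈ S, c j k) / 2 := by
  have split : ∀ j k : Fin n, c j k
      = (if j < k then c j k else 0) + (if k < j then c j k else 0) := by
    intro j k
    rcases lt_trichotomy j k with h | h | h
    · simp [h, asymm h]
    · simp [h, hdiag]
    · simp [h, asymm h]
  have h2 : (∑ j ∈ S, ∑ k ∈ S, c j k)
      = (∑ j ∈ S, ∑ k ∈ S, (if j < k then c j k else 0))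
        + (∑ j ∈ S, ∑ k ∈ S, (if k < j then c j k else 0)) := by
    rw [← Finset.sum_add_distrib]
    refine Finset.sum_congr rfl fun j _ => ?_
    rw [← Finset.sum_add_distrib]
    exact Finset.sum_congr rfl fun k _ => split j k
  have h3 : (∑ j ∈ S, ∑ k ∈ S, (if k < j then c j k else 0))
      = ∑ j ∈ S, ∑ k ∈ S, (if j < k then c j k else 0) := by
    rw [Finset.sum_comm]
    refine Finset.sum_congr rfl fun j _ => Finset.sum_congr rfl fun k _ => ?_
    by_cases h : j < k <;> simp [h, hsym j k]
  rw [h3] at h2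
  linarith

private lemma qubo_ind_eval {n : ℕ} (a : ℝ) (b : Fin n → ℝ) (c : Fin n → Fin n → ℝ)
    (hsym : ∀ j k, c j k = c k j) (hdiag : ∀ j, c j j = 0) (S : Finset (Fin n)) :
    (a + (∑ j, b j * (if j ∈ S then (1:ℝ) else 0)) +
      ∑ j, ∑ k, if j < k then c j k * (if j ∈ S then (1:ℝ) else 0) * (if k ∈ S then (1:ℝ) else 0) else 0)
    = a + (∑ j ∈ S, b j) + (∑ j ∈ S, ∑ k ∈ S, c j k) / 2 := by
  have h1 : (∑ j, b j * (if j ∈ S then (1:ℝ) else 0)) = ∑ j ∈ S, b j := by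
    simp [mul_ite, mul_one, mul_zero, Finset.sum_ite_mem]
  have key : ∀ j k : Fin n,
      (if j < k then c j k * (if j ∈ S then (1:ℝ) else 0) * (if k ∈ S then (1:ℝ) else 0) else 0)
      = (if k ∈ S then (if j ∈ S then (if j < k then c j k else 0) else 0) else 0) := by
    intro j k
    by_cases h1 : j ∈ S <;> by_cases h2 : k ∈ S <;> by_cases h3 : j < k <;> simp [h1, h2, h3]
  have h2 : (∑ j, ∑ k, if j < k then c j k * (if j ∈ S then (1:ℝ) else 0) * (if k ∈ S then (1:ℝ) else 0) else 0)
      = ∑ j ∈ S, ∑ k ∈ S, (if j < k then c j k else 0) := by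
    simp_rw [key, Finset.sum_ite_mem, Finset.univ_inter]
    have hpull : ∀ j : Fin n, (∑ k ∈ S, if j ∈ S then (if j < k then c j k else 0) else 0)
        = if j ∈ S then (∑ k ∈ S, (if j < k then c j k else 0)) else 0 := by
      intro j; by_cases h : j ∈ S <;> simp [h]
    simp_rw [hpull, Finset.sum_ite_mem, Finset.univ_inter]
  rw [h1, h2, qubo_half_sum c hsym hdiag]

private lemma qubo_sum2_erase {n : ℕ} (c : Fin n → Fin n → ℝ)
    (hsym : ∀ j k, c j k = c k j) (hdiag : ∀ j, c j j = 0)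
    (S : Finset (Fin n)) (i : Fin n) (hi : i ∈ S) :
    ∑ j ∈ S.erase i, ∑ k ∈ S.erase i, c j k
      = (∑ j ∈ S, ∑ k ∈ S, c j k) - 2 * ∑ j ∈ S.erase i, c i j := by
  have houter : (∑ j ∈ S, ∑ k ∈ S, c j k)
      = (∑ j ∈ S.erase i, ∑ k ∈ S, c j k) + ∑ k ∈ S, c i k :=
    (Finset.sum_erase_add S _ hi).symm
  have hinner : ∀ j, (∑ k ∈ S, c j k) = (∑ k ∈ S.erase i, c j k) + c j i := by
    intro j; exact (Finset.sum_erase_add S _ hi).symm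
  have hci : (∑ k ∈ S, c i k) = ∑ k ∈ S.erase i, c i k := by
    rw [hinner i, hdiag, add_zero]
  have hmid : (∑ j ∈ S.erase i, ∑ k ∈ S, c j k)
      = (∑ j ∈ S.erase i, ∑ k ∈ S.erase i, c j k) + ∑ j ∈ S.erase i, c j i := by
    rw [← Finset.sum_add_distrib]
    exact Finset.sum_congr rfl fun j _ => hinner j
  have hsymsum : (∑ j ∈ S.erase i, c j i) = ∑ j ∈ S.erase i, c i j :=
    Finset.sum_congr rfl fun j _ => hsym j i
  rw [houter, hmid, hci, hsymsum]
  ring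

theorem qubo_weight_r_gap_linear (n r : ℕ) (hr : 1 ≤ r) (hn : r + 1 ≤ n)
    (a : ℝ) (b : Fin n → ℝ) (c : Fin n → Fin n → ℝ) (B g : ℝ)
    (hsym : ∀ j k, c j k = c k j) (hdiag : ∀ j, c j j = 0)
    (Q : (Fin n → ℝ) → ℝ)
    (hQ : ∀ x, Q x = a + (∑ j, b j * x j) +
      ∑ j, ∑ k, if j < k then c j k * x j * x k else 0)
    (hzero : ∀ x : Fin n → ℝ, (∀ j, x j = 0 ∨ x j = 1) →
      (∑ j, x j) = (r : ℝ) → Q x = 0)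
    (hg : ∀ x : Fin n → ℝ, (∀ j, x j = 0 ∨ x j = 1) →
      ((∑ j, x j) = ((r : ℝ) - 1) ∨ (∑ j, x j) = ((r : ℝ) + 1)) → g ≤ Q x)
    (hb : ∀ j, -B ≤ b j) :
    (2 * (r : ℝ) - 1) * g ≤ B := by
  classical
  -- the value of Q on the indicator of a finset
  set f : Finset (Fin n) → ℝ :=
    fun S => a + (∑ j ∈ S, b j) + (∑ j ∈ S, ∑ k ∈ S, c j k) / 2 with hf
  have hx01 : ∀ (S : Finset (Fin n)) (j : Fin n),
      (if j ∈ S then (1:ℝ) else 0) = 0 ∨ (if j ∈ S then (1:ℝ) else 0) = 1 := by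
    intro S j; by_cases h : j ∈ S <;> simp [h]
  have hxsum : ∀ S : Finset (Fin n),
      (∑ j, (if j ∈ S then (1:ℝ) else 0)) = (S.card : ℝ) := by
    intro S; simp [Finset.sum_ite_mem]
  have hQeval : ∀ S : Finset (Fin n), Q (fun j => if j ∈ S then (1:ℝ) else 0) = f S := by
    intro S
    rw [hQ]
    exact qubo_ind_eval a b c hsym hdiag S
  -- erase formula
  have hferase : ∀ (S : Finset (Fin n)) (i : Fin n), i ∈ S →
      f (S.erase i) = f S - b i - ∑ j ∈ S.erase i, c i j := by
    intro S i hi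
    have hb' : (∑ j ∈ S.erase i, b j) = (∑ j ∈ S, b j) - b i := by
      have := Finset.sum_erase_add S b hi
      linarith
    simp only [hf]
    rw [hb', qubo_sum2_erase c hsym hdiag S i hi]
    ring
  -- the set A of the first r+1 indices
  set A : Finset (Fin n) := (Finset.univ : Finset (Fin (r+1))).map (Fin.castLEEmb hn) with hA
  have hmemA : ∀ j : Fin n, j ∈ A ↔ (j : ℕ) < r + 1 := by
    intro j
    simp only [hA, Finset.mem_map, Finset.mem_univ, true_and]
    constructor
    · rintro ⟨i, rfl⟩; exact i.isLt
    · intro h; exact ⟨⟨(j : ℕ), h⟩, rfl⟩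
  have hcardA : A.card = r + 1 := by simp [hA]
  have hn0 : 0 < n := lt_of_lt_of_le (Nat.succ_pos r) hn
  set i0 : Fin n := ⟨0, hn0⟩ with hi0
  have hi0A : i0 ∈ A := (hmemA i0).mpr (Nat.succ_pos r)
  -- Q(A) ≥ g  (weight r+1)
  have hgA : g ≤ f A := by
    rw [← hQeval A]
    apply hg _ (hx01 A)
    right
    rw [hxsum A, hcardA]
    push_cast
    ring
  -- each erase has weight r, so f(A.erase i) = 0
  have hcard_erase : ∀ i ∈ A, (A.erase i).card = r := by
    intro i hi
    rw [Finset.card_erase_of_mem hi, hcardA]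
    omega
  have hzeroA : ∀ i ∈ A, f (A.erase i) = 0 := by
    intro i hi
    rw [← hQeval]
    apply hzero _ (hx01 _)
    rw [hxsum, hcard_erase i hi]
  -- so the row sums are determined
  have hrow : ∀ i ∈ A, (∑ j ∈ A.erase i, c i j) = f A - b i := by
    intro i hi
    have := hferase A i hi
    rw [hzeroA i hi] at this
    linarith
  -- double-erase values
  have hkey : ∀ j ∈ A.erase i0, g ≤ c j i0 - f A := by
    intro j hj
    have hjA : j ∈ A := Finset.mem_of_mem_erase hj
    have hjne : j ≠ i0 := Finset.ne_of_mem_erase hj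
    have hji0 : j ∈ A.erase i0 := hj
    have hi0j : i0 ∈ A.erase j := Finset.mem_erase.mpr ⟨fun h => hjne h.symm, hi0A⟩
    -- f ((A.erase i0).erase j)
    have h1 : f ((A.erase i0).erase j)
        = f (A.erase i0) - b j - ∑ k ∈ (A.erase i0).erase j, c j k :=
      hferase (A.erase i0) j hj
    have hcomm : (A.erase i0).erase j = (A.erase j).erase i0 := Finset.erase_right_comm
    have h2 : (∑ k ∈ (A.erase i0).erase j, c j k)
        = (∑ k ∈ A.erase j, c j k) - c j i0 := by
      rw [hcomm]
      have := Finset.sum_erase_add (A.erase j) (fun k => c j k) hi0j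
      linarith
    have h3 : f ((A.erase i0).erase j) = c j i0 - f A := by
      rw [h1, h2, hzeroA i0 hi0A, hrow j hjA]
      ring
    have hcard2 : ((A.erase i0).erase j).card = r - 1 := by
      rw [Finset.card_erase_of_mem hj, hcard_erase i0 hi0A]
    have hgle : g ≤ f ((A.erase i0).erase j) := by
      rw [← hQeval]
      apply hg _ (hx01 _)
      left
      rw [hxsum, hcard2, Nat.cast_pred hr]
    linarith
  -- sum the key inequality over the r elements of A.erase i0
  have hsumineq : (r : ℝ) * g ≤ (∑ j ∈ A.erase i0, c j i0) - (r : ℝ) * f A := by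
    have h := Finset.sum_le_sum hkey
    rw [Finset.sum_const, hcard_erase i0 hi0A, nsmul_eq_mul] at h
    rw [Finset.sum_sub_distrib, Finset.sum_const, hcard_erase i0 hi0A, nsmul_eq_mul] at h
    linarith
  have hrowsym : (∑ j ∈ A.erase i0, c j i0) = ∑ j ∈ A.erase i0, c i0 j :=
    Finset.sum_congr rfl fun j _ => hsym j i0
  have hrow0 := hrow i0 hi0A
  have hbB := hb i0
  have hr1 : (1 : ℝ) ≤ (r : ℝ) := by exact_mod_cast hr
  nlinarith [hsumineq, hrowsym, hrow0, hbB, hgA, mul_le_mul_of_nonneg_left hgA (sub_nonneg.mpr hr1)]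
end

section
/- Theorem (optimality of the standard penalty model): Among all QUBOs Q(x) = a + Σ_j b_j x_j + Σ_{j<k} c_{jk} x_j x_k on n ≥ r+1 variables with b_j ≥ -B and c_{jk} ≤ C for all j,k, vanishing on all bitstrings of Hamming weight r (r ≥ 1), the infimum of Q over bitstrings of weight ≠ r is at most min(B/(2r-1), C/2); moreover Q_r(x) = E·(r - Σ_j x_j)² with E = min(B/(2r-1), C/2) achieves this bound with equality. -/
/-!
Flipping bit `i` from 0 to 1 changes a QUBO by `b_i + ∑_k e_{ik} x_k`, where `e_{ik}` is `c_{ik}`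
or `c_{ki}`; hence the second difference in two bits `i ≠ k` is `e_{ik}`. Suppose `Q` vanishes in
weight `r` and exceeds `E` off weight `r`; fix `U` of weight `r` and `i ∉ U`. For `k ∈ U`, the
second difference over `U \ {k}` gives `e_{ik} = Q(U ∪ {i}) + Q(U \ {k}) > Q(U ∪ {i}) + E > 2E`,
so `2E < C`. The first difference over `U` gives
`b_i = Q(U ∪ {i}) - ∑_{k ∈ U} e_{ik} < (1 - r) Q(U ∪ {i}) - rE ≤ -(2r - 1)E`, so `(2r - 1)E < B`.
Together these contradict `E = min (B / (2r - 1)) (C / 2)`.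
-/

open Finset

section

variable {ι : Type*}

noncomputable def bitsOf (S : Finset ι) : ι → ℝ := (S : Set ι).indicator 1

theorem bitsOf_eq_zero_or_one (S : Finset ι) (j : ι) : bitsOf S j = 0 ∨ bitsOf S j = 1 := by
  by_cases h : j ∈ S <;> simp [bitsOf, h]

theorem sum_bitsOf [Fintype ι] (S : Finset ι) : ∑ j, bitsOf S j = #S := by
  classical
  simp [bitsOf, Set.indicator_apply]

theorem bitsOf_insert [DecidableEq ι] {S : Finset ι} {i : ι} (hi : i ∉ S) :
    bitsOf (insert i S) = bitsOf S + Pi.single i 1 := by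
  ext j
  by_cases h : j = i <;> simp [bitsOf, Set.indicator_apply, h, hi]

theorem sum_eq_card_filter_of_bits [Fintype ι] {x : ι → ℝ}
    (hx : ∀ j, x j = 0 ∨ x j = 1) : ∑ j, x j = #{j | x j = 1} := by
  rw [card_filter, Nat.cast_sum]
  refine sum_congr rfl fun j _ => ?_
  rcases hx j with h | h <;> simp [h]

end

section

variable {ι : Type*} [LinearOrder ι]

def pairCoeff (c : ι → ι → ℝ) (j k : ι) : ℝ :=
  (if j < k then c j k else 0) + (if k < j then c k j else 0)

theorem pairCoeff_le {c : ι → ι → ℝ} {C : ℝ} (hc : ∀ j k, j < k → c j k ≤ C) {i k : ι}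
    (hik : i ≠ k) : pairCoeff c i k ≤ C := by
  rcases hik.lt_or_gt with h | h
  · simpa [pairCoeff, h, h.not_gt] using hc i k h
  · simpa [pairCoeff, h, h.not_gt] using hc k i h

variable [Fintype ι]

def qubo (a : ℝ) (b : ι → ℝ) (c : ι → ι → ℝ) (x : ι → ℝ) : ℝ :=
  a + (∑ j, b j * x j) + ∑ j, ∑ k, if j < k then c j k * x j * x k else 0

theorem qubo_add_single (a : ℝ) (b : ι → ℝ) (c : ι → ι → ℝ) (x : ι → ℝ) (i : ι) :
    qubo a b c (x + Pi.single i 1) = qubo a b c x + b i + ∑ k, pairCoeff c i k * x k := by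
  set y : ι → ℝ := x + Pi.single i 1
  have hquad : ∀ j k, (if j < k then c j k * y j * y k else 0)
      = (if j < k then c j k * x j * x k else 0)
        + (if k = i then (if j < i then c j i * x j else 0) else 0)
        + (if j = i then (if i < k then c i k * x k else 0) else 0) := by
    intro j k
    simp only [y, Pi.add_apply, Pi.single_apply]
    by_cases hj : j = i <;> by_cases hk : k = i <;> subst_vars <;> split_ifs <;> first | order | ring
  have hlin : ∑ j, b j * y j = ∑ j, b j * x j + b i := by
    simp [y, mul_add, sum_add_distrib, Pi.single_apply]
  simp only [qubo, hquad, hlin, sum_add_distrib, sum_ite_irrel, sum_const_zero, sum_ite_eq',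
    mem_univ, if_true]
  simp only [pairCoeff, add_mul, ite_mul, zero_mul, sum_add_distrib]
  ring

variable (a : ℝ) (b : ι → ℝ) (c : ι → ι → ℝ)

theorem qubo_bitsOf_insert {S : Finset ι} {i : ι} (hi : i ∉ S) :
    qubo a b c (bitsOf (insert i S)) = qubo a b c (bitsOf S) + b i + ∑ k ∈ S, pairCoeff c i k := by
  rw [bitsOf_insert hi, qubo_add_single]
  simp [bitsOf, Set.indicator_apply]

theorem qubo_bitsOf_insert_insert {S : Finset ι} {i k : ι} (hik : i ≠ k) (hi : i ∉ S)
    (hk : k ∉ S) :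
    qubo a b c (bitsOf (insert i (insert k S))) + qubo a b c (bitsOf S)
      = qubo a b c (bitsOf (insert i S)) + qubo a b c (bitsOf (insert k S)) + pairCoeff c i k := by
  have hi' : i ∉ insert k S := by simp [hik, hi]
  rw [qubo_bitsOf_insert a b c hi', qubo_bitsOf_insert a b c hi, qubo_bitsOf_insert a b c hk,
    sum_insert hk]
  ring

variable {a b c}

theorem lt_of_forall_card_ne_lt_qubo {r : ℕ} (hr : 1 ≤ r) (hn : r + 1 ≤ Fintype.card ι)
    {B C E : ℝ} (hb : ∀ j, -B ≤ b j) (hc : ∀ j k, j < k → c j k ≤ C)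
    (hzero : ∀ S : Finset ι, #S = r → qubo a b c (bitsOf S) = 0)
    (hpos : ∀ S : Finset ι, #S ≠ r → E < qubo a b c (bitsOf S)) :
    (2 * r - 1) * E < B ∧ 2 * E < C := by
  obtain ⟨U, i, hiU, hU⟩ : ∃ (U : Finset ι) (i : ι), i ∉ U ∧ #U = r := by
    obtain ⟨T, -, hT⟩ := exists_subset_card_eq (s := univ) (n := r + 1) (by simpa using hn)
    obtain ⟨i, hi⟩ := card_pos.mp (show 0 < #T by omega)
    exact ⟨T.erase i, i, notMem_erase i T, by rw [card_erase_of_mem hi, hT]; rfl⟩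
  set Q := qubo a b c (bitsOf (insert i U))
  have hQ : E < Q := hpos _ (by rw [card_insert_of_notMem hiU]; omega)
  have hpair : ∀ k ∈ U, Q + E < pairCoeff c i k := by
    intro k hk
    have hik : i ≠ k := fun h => hiU (h ▸ hk)
    have hi : i ∉ U.erase k := fun h => hiU (mem_of_mem_erase h)
    have hcard : #(U.erase k) = r - 1 := by rw [card_erase_of_mem hk, hU]
    have hdiff := qubo_bitsOf_insert_insert a b c hik hi (notMem_erase k U)
    rw [insert_erase hk, hzero U hU,
      hzero (insert i (U.erase k)) (by rw [card_insert_of_notMem hi]; omega)] at hdiff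
    have := hpos (U.erase k) (by omega)
    linarith
  obtain ⟨k, hk⟩ := card_pos.mp (show 0 < #U by omega)
  constructor
  · have hsum : (r : ℝ) * (Q + E) < ∑ k ∈ U, pairCoeff c i k := by
      have := sum_lt_sum_of_nonempty ⟨k, hk⟩ hpair
      rwa [sum_const, hU, nsmul_eq_mul] at this
    have hfirst := qubo_bitsOf_insert a b c hiU
    rw [hzero U hU] at hfirst
    have hr' : (1 : ℝ) ≤ r := by exact_mod_cast hr
    nlinarith [hb i]
  · linarith [hpair k hk, pairCoeff_le hc (show i ≠ k from fun h => hiU (h ▸ hk))]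

end

theorem one_le_sq_natCast_sub_natCast {m r : ℕ} (h : m ≠ r) : 1 ≤ ((r : ℝ) - m) ^ 2 := by
  have : (1 : ℤ) ≤ ((r : ℤ) - m) ^ 2 := by
    rw [one_le_sq_iff_one_le_abs]; exact Int.one_le_abs (by omega)
  exact_mod_cast this

theorem qubo_weight_r_optimality (n r : ℕ) (hr : 1 ≤ r) (hn : r + 1 ≤ n)
    (B C : ℝ) (hB : 0 < B) (hC : 0 < C)
    (E : ℝ) (hE : E = min (B / (2 * (r : ℝ) - 1)) (C / 2)) :
    -- (1) upper bound: every admissible QUBO vanishing on weight-r bitstrings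
    -- has some bitstring of weight ≠ r with penalty at most E
    (∀ (a : ℝ) (b : Fin n → ℝ) (c : Fin n → Fin n → ℝ),
      (∀ j, -B ≤ b j) → (∀ j k, j < k → c j k ≤ C) →
      (∀ x : Fin n → ℝ, (∀ j, x j = 0 ∨ x j = 1) → (∑ j, x j) = (r : ℝ) →
        a + (∑ j, b j * x j) +
          (∑ j, ∑ k, if j < k then c j k * x j * x k else 0) = 0) →
      ∃ x : Fin n → ℝ, (∀ j, x j = 0 ∨ x j = 1) ∧ (∑ j, x j) ≠ (r : ℝ) ∧
        a + (∑ j, b j * x j) +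
          (∑ j, ∑ k, if j < k then c j k * x j * x k else 0) ≤ E) ∧
    -- (2) Q_r achieves this bound with equality
    ((∀ x : Fin n → ℝ, (∀ j, x j = 0 ∨ x j = 1) → (∑ j, x j) = (r : ℝ) →
        E * ((r : ℝ) - ∑ j, x j)^2 = 0) ∧
     (∀ x : Fin n → ℝ, (∀ j, x j = 0 ∨ x j = 1) → (∑ j, x j) ≠ (r : ℝ) →
        E ≤ E * ((r : ℝ) - ∑ j, x j)^2) ∧
     (∃ x : Fin n → ℝ, (∀ j, x j = 0 ∨ x j = 1) ∧ (∑ j, x j) ≠ (r : ℝ) ∧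
        E * ((r : ℝ) - ∑ j, x j)^2 = E)) := by
  have hr' : (1 : ℝ) ≤ r := by exact_mod_cast hr
  have h2r : (0 : ℝ) < 2 * r - 1 := by linarith
  have hE0 : 0 ≤ E := hE ▸ le_min (div_pos hB h2r).le (by linarith)
  obtain ⟨T, -, hT⟩ := exists_subset_card_eq (s := (univ : Finset (Fin n))) (n := r + 1)
    (by rwa [card_univ, Fintype.card_fin])
  have hTr : ∑ j, bitsOf T j ≠ r := by rw [sum_bitsOf, hT]; push_cast; linarith
  refine ⟨fun a b c hb hc hzero => ?_, fun x _ hx => by rw [hx, sub_self]; ring,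
    fun x hx hxr => ?_, bitsOf T, bitsOf_eq_zero_or_one T, hTr, ?_⟩
  · by_contra! hlt
    obtain ⟨hBE, hCE⟩ := lt_of_forall_card_ne_lt_qubo hr (by simpa using hn) hb hc
      (fun S hS => hzero _ (bitsOf_eq_zero_or_one S) (by rw [sum_bitsOf, hS]))
      (fun S hS => hlt _ (bitsOf_eq_zero_or_one S) (by rw [sum_bitsOf]; exact_mod_cast hS))
    exact (lt_min ((lt_div_iff₀ h2r).2 (by linarith)) (by linarith)).ne hE
  · rw [sum_eq_card_filter_of_bits hx] at hxr ⊢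
    exact le_mul_of_one_le_right hE0 (one_le_sq_natCast_sub_natCast (by exact_mod_cast hxr))
  · rw [sum_bitsOf, hT]; push_cast; ring
end

section
/- Let Q(x) = a + Σ_j b_j x_j + Σ_{j<k} c_{jk} x_j x_k be a QUBO on n ≥ 2 variables with Q(x) = 0 for all bitstrings of Hamming weight 1, and suppose c_{jk} = 0 for some pair j < k. Then there exists a bitstring x with Hamming weight ≠ 1 and Q(x) ≤ 0; in particular if additionally Q(x) ≥ 0 for all bitstrings, some bitstring of weight ≠ 1 satisfies Q(x) = 0. -/
theorem qubo_weight_one_sparse (n : ℕ) (hn : 2 ≤ n)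
    (a : ℝ) (b : Fin n → ℝ) (c : Fin n → Fin n → ℝ)
    (Q : (Fin n → ℝ) → ℝ)
    (hQ : ∀ x, Q x = a + (∑ j, b j * x j) +
      ∑ j, ∑ k, if j < k then c j k * x j * x k else 0)
    (hzero : ∀ x : Fin n → ℝ, (∀ j, x j = 0 ∨ x j = 1) → (∑ j, x j) = 1 → Q x = 0)
    (j k : Fin n) (hjk : j < k) (hc : c j k = 0) :
    (∃ x : Fin n → ℝ, (∀ i, x i = 0 ∨ x i = 1) ∧ (∑ i, x i) ≠ 1 ∧ Q x ≤ 0) ∧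
    ((∀ x : Fin n → ℝ, (∀ i, x i = 0 ∨ x i = 1) → 0 ≤ Q x) →
      ∃ x : Fin n → ℝ, (∀ i, x i = 0 ∨ x i = 1) ∧ (∑ i, x i) ≠ 1 ∧ Q x = 0) := by
  have hne : j ≠ k := ne_of_lt hjk
  -- unit vectors
  set e : Fin n → (Fin n → ℝ) := fun i l => if l = i then 1 else 0 with he
  have ebit : ∀ i l, e i l = 0 ∨ e i l = 1 := by
    intro i l; simp only [he]; split <;> simp
  have esum : ∀ i, (∑ l, e i l) = 1 := by
    intro i; simp [he]
  have eQ : ∀ i, Q (e i) = a + b i := by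
    intro i
    rw [hQ]
    have h1 : (∑ l, b l * e i l) = b i := by
      simp [he, mul_ite]
    have h2 : (∑ p, ∑ q, if p < q then c p q * e i p * e i q else 0) = 0 := by
      apply Finset.sum_eq_zero; intro p _
      apply Finset.sum_eq_zero; intro q _
      split
      · rename_i hpq
        rcases eq_or_ne p i with hp | hp
        · have : q ≠ i := by rintro rfl; exact absurd hpq (by simp [hp])
          simp [he, this]
        · simp [he, hp]
      · rfl
    rw [h1, h2, add_zero]
  have hbj : a + b j = 0 := by rw [← eQ j]; exact hzero _ (ebit j) (esum j)
  have hbk : a + b k = 0 := by rw [← eQ k]; exact hzero _ (ebit k) (esum k)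
  -- pair vector
  set p : Fin n → ℝ := fun l => if l ∈ ({j, k} : Finset (Fin n)) then 1 else 0 with hp
  have pbit : ∀ l, p l = 0 ∨ p l = 1 := by
    intro l; simp only [hp]; split <;> simp
  have psum : (∑ l, p l) = 2 := by
    simp only [hp]
    rw [Finset.sum_ite_mem, Finset.univ_inter, Finset.sum_const]
    rw [Finset.card_insert_of_notMem (by simp [hne]), Finset.card_singleton]
    norm_num
  have pj : p j = 1 := by simp [hp]
  have pk : p k = 1 := by simp [hp]
  have pother : ∀ l, l ≠ j → l ≠ k → p l = 0 := by
    intro l h1 h2; simp [hp, h1, h2]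
  have pQ : Q p = a + (b j + b k) + c j k := by
    rw [hQ]
    have h1 : (∑ l, b l * p l) = b j + b k := by
      have : ∀ l, b l * p l = (if l = j then b j else 0) + (if l = k then b k else 0) := by
        intro l
        rcases eq_or_ne l j with rfl | h1
        · simp [pj, hne]
        · rcases eq_or_ne l k with rfl | h2
          · simp [pk, h1]
          · simp [pother l h1 h2, h1, h2]
      rw [Finset.sum_congr rfl (fun l _ => this l), Finset.sum_add_distrib]
      simp
    have h2 : (∑ u, ∑ v, if u < v then c u v * p u * p v else 0) = c j k := by
      rw [Finset.sum_eq_single j]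
      · rw [Finset.sum_eq_single k]
        · simp [hjk, pj, pk]
        · intro v _ hv
          split
          · rename_i huv
            have : v ≠ j := ne_of_gt huv
            rw [pother v this hv, mul_zero]
          · rfl
        · simp
      · intro u _ hu
        apply Finset.sum_eq_zero; intro v _
        split
        · rename_i huv
          rcases eq_or_ne u k with h2 | h2
          · have hkv : k < v := h2 ▸ huv
            have hv1 : v ≠ j := ne_of_gt (lt_trans hjk hkv)
            have hv2 : v ≠ k := ne_of_gt hkv
            rw [pother v hv1 hv2, mul_zero]
          · rw [pother u hu h2, mul_zero, zero_mul]
        · rfl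
      · simp
    rw [h1, h2]
  have pQ' : Q p = -a := by rw [pQ, hc]; linarith
  have main : ∃ x : Fin n → ℝ, (∀ i, x i = 0 ∨ x i = 1) ∧ (∑ i, x i) ≠ 1 ∧ Q x ≤ 0 := by
    rcases le_or_gt a 0 with ha | ha
    · refine ⟨fun _ => 0, fun _ => Or.inl rfl, by simp, ?_⟩
      rw [hQ]; simp [ha]
    · exact ⟨p, pbit, by rw [psum]; norm_num, by rw [pQ']; linarith⟩
  refine ⟨main, fun hnn => ?_⟩
  obtain ⟨x, hx1, hx2, hx3⟩ := main
  exact ⟨x, hx1, hx2, le_antisymm hx3 (hnn x hx1)⟩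
end

section
/- Proposition (no sparse penalty models): Let Q(x) = a + Σ_j b_j x_j + Σ_{j<k} c_{jk} x_j x_k on n variables with Q(x) = 0 for all bitstrings of Hamming weight r (1 ≤ r ≤ n-1), Q(x) ≥ 0 for all bitstrings, and c_{uv} = 0 for some pair u < v with n ≥ r+1 large enough that a subset S of size r-1 avoiding u and v exists (i.e. n ≥ r+1). Then there exists a bitstring x of Hamming weight r-1 or r+1 with Q(x) = 0. -/
/-!
Pick a set `S` of size `r - 1` avoiding `u` and `v`. For any quadratic pseudo-Boolean function the
mixed second difference `Q(S ∪ {u, v}) + Q(S) - Q(S ∪ {u}) - Q(S ∪ {v})` equals `c u v`. Here the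
two middle sets have weight `r`, so their values vanish, and `c u v = 0`; hence
`Q(S ∪ {u, v}) + Q(S) = 0`, and both terms are nonnegative, so `Q(S) = 0`.
-/

open Finset

section Bitstring

variable {ι : Type*} [DecidableEq ι]

def IsBitstring (x : ι → ℝ) : Prop := ∀ j, x j = 0 ∨ x j = 1

theorem isBitstring_indicator (S : Finset ι) :
    IsBitstring fun j => if j ∈ S then (1 : ℝ) else 0 := by
  intro j
  by_cases hj : j ∈ S <;> simp [hj]

theorem IsBitstring.add_single {x : ι → ℝ} (hx : IsBitstring x) {u : ι} (hu : x u = 0) :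
    IsBitstring (x + Pi.single u 1) := by
  intro j
  by_cases hj : j = u
  · subst hj
    simp [hu]
  · simpa [Pi.single_apply, hj] using hx j

end Bitstring

section Qubo

variable {ι : Type*} [Fintype ι] [LinearOrder ι]

def quboValue (a : ℝ) (b : ι → ℝ) (c : ι → ι → ℝ) (x : ι → ℝ) : ℝ :=
  a + (∑ j, b j * x j) + ∑ j, ∑ k, if j < k then c j k * x j * x k else 0

theorem quboValue_mixed_difference (a : ℝ) (b : ι → ℝ) (c : ι → ι → ℝ) (x p w : ι → ℝ) :
    quboValue a b c (x + p + w) + quboValue a b c x =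
      quboValue a b c (x + p) + quboValue a b c (x + w) +
        ∑ j, ∑ k, if j < k then c j k * (p j * w k + w j * p k) else 0 := by
  have hlin : (∑ j, b j * (x + p + w) j) + ∑ j, b j * x j =
      (∑ j, b j * (x + p) j) + ∑ j, b j * (x + w) j := by
    simp only [← sum_add_distrib, Pi.add_apply]
    exact sum_congr rfl fun j _ => by ring
  have hquad : (∑ j, ∑ k, if j < k then c j k * (x + p + w) j * (x + p + w) k else 0) +
      (∑ j, ∑ k, if j < k then c j k * x j * x k else 0) =
      (∑ j, ∑ k, if j < k then c j k * (x + p) j * (x + p) k else 0) +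
        (∑ j, ∑ k, if j < k then c j k * (x + w) j * (x + w) k else 0) +
        ∑ j, ∑ k, if j < k then c j k * (p j * w k + w j * p k) else 0 := by
    simp only [← sum_add_distrib, Pi.add_apply]
    exact sum_congr rfl fun j _ => sum_congr rfl fun k _ => by split_ifs <;> ring
  unfold quboValue
  linarith

theorem sum_cross_term_single_single (c : ι → ι → ℝ) {u v : ι} (huv : u < v) :
    (∑ j, ∑ k, if j < k then
      c j k * ((Pi.single u 1 : ι → ℝ) j * (Pi.single v 1 : ι → ℝ) k +
        (Pi.single v 1 : ι → ℝ) j * (Pi.single u 1 : ι → ℝ) k) else 0) = c u v := by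
  have hterm : ∀ j k, (if j < k then
      c j k * ((Pi.single u 1 : ι → ℝ) j * (Pi.single v 1 : ι → ℝ) k +
        (Pi.single v 1 : ι → ℝ) j * (Pi.single u 1 : ι → ℝ) k) else 0) =
      if j = u then (if k = v then c u v else 0) else 0 := by
    intro j k
    simp only [Pi.single_apply]
    split_ifs <;> subst_vars <;> first | (exfalso; order) | simp
  simp [hterm]

theorem quboValue_eq_zero_of_add_single_eq_zero {a : ℝ} {b : ι → ℝ} {c : ι → ι → ℝ}
    (hnonneg : ∀ x, IsBitstring x → 0 ≤ quboValue a b c x) {x : ι → ℝ} (hx : IsBitstring x)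
    {u v : ι} (huv : u < v) (hxu : x u = 0) (hxv : x v = 0) (hc : c u v = 0)
    (hu : quboValue a b c (x + Pi.single u 1) = 0)
    (hv : quboValue a b c (x + Pi.single v 1) = 0) :
    quboValue a b c x = 0 := by
  have hxuv : IsBitstring (x + Pi.single u 1 + Pi.single v 1) :=
    (hx.add_single hxu).add_single (by simp [hxv, huv.ne'])
  have hdiff := quboValue_mixed_difference a b c x (Pi.single u 1) (Pi.single v 1)
  rw [sum_cross_term_single_single c huv, hu, hv, hc] at hdiff
  linarith [hnonneg x hx, hnonneg _ hxuv]

end Qubo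

theorem qubo_no_sparse_penalty_general (n r : ℕ) (hr : 1 ≤ r) (hn : r + 1 ≤ n)
    (a : ℝ) (b : Fin n → ℝ) (c : Fin n → Fin n → ℝ)
    (Q : (Fin n → ℝ) → ℝ)
    (hQ : ∀ x, Q x = a + (∑ j, b j * x j) +
      ∑ j, ∑ k, if j < k then c j k * x j * x k else 0)
    (hzero : ∀ x : Fin n → ℝ, (∀ j, x j = 0 ∨ x j = 1) →
      (∑ j, x j) = (r : ℝ) → Q x = 0)
    (hnonneg : ∀ x : Fin n → ℝ, (∀ j, x j = 0 ∨ x j = 1) → 0 ≤ Q x)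
    (u v : Fin n) (huv : u < v) (hc : c u v = 0) :
    ∃ x : Fin n → ℝ, (∀ j, x j = 0 ∨ x j = 1) ∧
      ((∑ j, x j) = ((r : ℝ) - 1) ∨ (∑ j, x j) = ((r : ℝ) + 1)) ∧ Q x = 0 := by
  obtain rfl : Q = quboValue a b c := funext hQ
  obtain ⟨S, hS, hcard⟩ : ∃ S ⊆ (univ \ {u, v} : Finset (Fin n)), #S = r - 1 := by
    refine exists_subset_card_eq ?_
    rw [card_sdiff_of_subset (subset_univ _), card_pair huv.ne, card_univ, Fintype.card_fin]
    omega
  set x : Fin n → ℝ := fun j => if j ∈ S then 1 else 0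
  have hx : IsBitstring x := isBitstring_indicator S
  have hxu : x u = 0 := if_neg fun h => by simpa using hS h
  have hxv : x v = 0 := if_neg fun h => by simpa using hS h
  have hsum : ∑ j, x j = r - 1 := by simp [x, hcard, Nat.cast_sub hr]
  have hsum_single (w : Fin n) : ∑ j, (x + Pi.single w 1 : Fin n → ℝ) j = r := by
    simp [sum_add_distrib, hsum]
  refine ⟨x, hx, Or.inl hsum, quboValue_eq_zero_of_add_single_eq_zero hnonneg hx huv hxu hxv hc
    (hzero _ (hx.add_single hxu) (hsum_single u)) (hzero _ (hx.add_single hxv) (hsum_single v))⟩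

theorem qubo_no_sparse_penalty (n r : ℕ) (hr : 1 ≤ r) (hn : r + 1 ≤ n)
    (a : ℝ) (b : Fin n → ℝ) (c : Fin n → Fin n → ℝ)
    (hsym : ∀ j k, c j k = c k j) (hdiag : ∀ j, c j j = 0)
    (Q : (Fin n → ℝ) → ℝ)
    (hQ : ∀ x, Q x = a + (∑ j, b j * x j) +
      ∑ j, ∑ k, if j < k then c j k * x j * x k else 0)
    (hzero : ∀ x : Fin n → ℝ, (∀ j, x j = 0 ∨ x j = 1) →
      (∑ j, x j) = (r : ℝ) → Q x = 0)
    (hnonneg : ∀ x : Fin n → ℝ, (∀ j, x j = 0 ∨ x j = 1) → 0 ≤ Q x)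
    (u v : Fin n) (huv : u < v) (hc : c u v = 0) :
    ∃ x : Fin n → ℝ, (∀ j, x j = 0 ∨ x j = 1) ∧
      ((∑ j, x j) = ((r : ℝ) - 1) ∨ (∑ j, x j) = ((r : ℝ) + 1)) ∧ Q x = 0 :=
  qubo_no_sparse_penalty_general n r hr hn a b c Q hQ hzero hnonneg u v huv hc
end
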